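/- Let p be a prime and let c ∈ Z(SU(p)) with c ≠ 1. Then there exist elements x, y ∈ SU(p) with [x,y] = c. -/

import Mathlib

/-!
Common setup: the special unitary group `SU(p)`, the central product
`G_{m,p} = SU(p)^m / Δ(Z/p)`, the space `Hom(Z^n, G)` of commuting `n`-tuples,
and the moduli space `Rep(Z^n, G) = Hom(Z^n, G)/G`.
-/

/-- The special unitary group `SU(p)`: the subgroup of the unitary group of `p × p`
complex matrices consisting of the matrices of determinant `1`. -/
def SUgrp (p : ℕ) : Subgroup (Matrix.unitaryGroup (Fin p) ℂ) :=
  MonoidHom.ker (Matrix.detMonoidHom.comp (Matrix.unitaryGroup (Fin p) ℂ).subtype)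

/-- `SU p` as a topological group (topologized as a subspace of the matrices). -/
abbrev SU (p : ℕ) : Type := SUgrp p

/-- The underlying `p × p` complex matrix of an element of `SU p`. -/
noncomputable def SU.mat {p : ℕ} (x : SU p) : Matrix (Fin p) (Fin p) ℂ :=
  ((x : Matrix.unitaryGroup (Fin p) ℂ) : Matrix (Fin p) (Fin p) ℂ)

/-- The diagonal embedding of a group into an `m`-fold product. -/
def diagHom (G : Type*) [Group G] (m : ℕ) : G →* (Fin m → G) where
  toFun g := fun _ => g
  map_one' := rfl
  map_mul' _ _ := rfl

/-- The diagonal central subgroup `Δ(Z/p) ⊆ SU(p)^m`, consisting of the constant tuples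
`(z, ..., z)` with `z` in the center of `SU(p)`. -/
def DeltaZp (p m : ℕ) : Subgroup (Fin m → SU p) :=
  (Subgroup.center (SU p)).map (diagHom (SU p) m)

instance DeltaZp.normal (p m : ℕ) : (DeltaZp p m).Normal := by
  constructor
  intro x hx g
  obtain ⟨z, hz, rfl⟩ := hx
  refine ⟨z, hz, ?_⟩
  funext i
  simp only [diagHom, MonoidHom.coe_mk, OneHom.coe_mk, Pi.mul_apply, Pi.inv_apply]
  rw [SetLike.mem_coe, Subgroup.mem_center_iff] at hz
  rw [hz (g i), mul_assoc, mul_inv_cancel, mul_one]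

/-- The central product `G_{m,p} = SU(p)^m / Δ(Z/p)`, a topological group with the
quotient topology. -/
abbrev Gmp (p m : ℕ) : Type := (Fin m → SU p) ⧸ DeltaZp p m

/-- `Hom(Z^n, G)`: the space of commuting `n`-tuples in `G`, topologized as a subspace
of `G^n`. -/
def commTuples (G : Type*) [Group G] (n : ℕ) : Set (Fin n → G) :=
  {f | ∀ i j, Commute (f i) (f j)}

/-- The trivial commuting tuple `(1, ..., 1)`. -/
def trivTuple (G : Type*) [Group G] (n : ℕ) : commTuples G n :=
  ⟨fun _ => 1, fun _ _ => Commute.one_left 1⟩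

/-- The simultaneous-conjugation equivalence relation on the space of commuting
`n`-tuples in `G`. -/
def conjSetoid (G : Type*) [Group G] (n : ℕ) : Setoid (commTuples G n) where
  r x y := ∃ g : G, ∀ i, (y : Fin n → G) i = g * (x : Fin n → G) i * g⁻¹
  iseqv := by
    constructor
    · exact fun x => ⟨1, fun i => by group⟩
    · rintro x y ⟨g, hg⟩
      exact ⟨g⁻¹, fun i => by rw [hg i]; group⟩
    · rintro x y z ⟨g, hg⟩ ⟨h, hh⟩
      exact ⟨h * g, fun i => by rw [hh i, hg i]; group⟩

/-- `Rep(Z^n, G) = Hom(Z^n, G)/G`: the quotient of the space of commuting `n`-tuples by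
simultaneous conjugation, with the quotient topology. -/
abbrev RepSpace (G : Type*) [Group G] [TopologicalSpace G] (n : ℕ) : Type _ :=
  Quotient (conjSetoid G n)

/-- `N(n,m,p) = p^((m-1)(n-2))·(p^n − 1)·(p^(n-1) − 1)/(p² − 1) + 1` (the division is exact). -/
def Ncomp (n m p : ℕ) : ℕ :=
  p ^ ((m - 1) * (n - 2)) * (p ^ n - 1) * (p ^ (n - 1) - 1) / (p ^ 2 - 1) + 1

/-!
A central element `c` of `SU(n)` commutes with every unitary matrix (a unitary becomes an element
of `SU(n)` after multiplication by a scalar), and the unitaries span all matrices, so `c = ζ • 1`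
with `ζ ^ n = 1`. The cyclic shift `P` and the clock matrix `D = diag(1, ζ, …, ζ ^ (n - 1))`
satisfy `P * D = ζ • (D * P)`; rescaled into `SU(n)`, they have commutator `c`.
-/

open Matrix Subgroup
open scoped commutatorElement

theorem commutatorElement_eq_of_mul_eq {G : Type*} [Group G] {x y c : G}
    (h : x * y = c * (y * x)) : ⁅x, y⁆ = c := by
  rw [commutatorElement_def, h]
  group

theorem Complex.mem_unitary_of_norm_eq_one {z : ℂ} (hz : ‖z‖ = 1) : z ∈ unitary ℂ := by
  rw [Unitary.mem_iff_star_mul_self, Complex.star_def, Complex.conj_mul', hz]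
  norm_num

theorem Matrix.permMatrix_mem_unitaryGroup {ι R : Type*} [Fintype ι] [DecidableEq ι]
    [CommRing R] [StarRing R] (σ : Equiv.Perm ι) : σ.permMatrix R ∈ unitaryGroup ι R := by
  rw [mem_unitaryGroup_iff', star_eq_conjTranspose, conjTranspose_permMatrix,
    ← permMatrix_mul, mul_inv_cancel, permMatrix_one]

open scoped Matrix.Norms.L2Operator in
theorem Matrix.exists_scalar_eq_of_forall_commute_unitary {ι : Type*} [Fintype ι]
    [DecidableEq ι] {C : Matrix ι ι ℂ} (hC : ∀ U ∈ unitaryGroup ι ℂ, Commute U C) :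
    ∃ ζ : ℂ, scalar ι ζ = C := by
  have hall (M : Matrix ι ι ℂ) : Commute M C := by
    have hM : M ∈ Submodule.span ℂ (unitary (Matrix ι ι ℂ) : Set (Matrix ι ι ℂ)) := by
      rw [CStarAlgebra.span_unitary]; trivial
    induction hM using Submodule.span_induction with
    | mem U hU => exact hC U hU
    | zero => exact Commute.zero_left C
    | add A B _ _ hA hB => exact hA.add_left hB
    | smul a A _ hA => exact hA.smul_left a
  exact mem_range_scalar_iff_commute_single'.mpr fun i j => hall _

section ClockShift

variable (n : ℕ) (R : Type*) [CommRing R]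

def shiftMatrix : Matrix (Fin n) (Fin n) R :=
  (finRotate n).permMatrix R

variable {R}

def clockMatrix (ζ : R) : Matrix (Fin n) (Fin n) R :=
  diagonal fun k => ζ ^ (k : ℕ)

variable {n}

theorem pow_val_finRotate [NeZero n] {M : Type*} [Monoid M] {ζ : M} (hζ : ζ ^ n = 1)
    (a : Fin n) : ζ ^ (finRotate n a : ℕ) = ζ * ζ ^ (a : ℕ) := by
  obtain ⟨m, rfl⟩ := Nat.exists_eq_add_one_of_ne_zero (NeZero.ne n)
  rw [coe_finRotate]
  split_ifs with h
  · rw [h, Fin.val_last, ← pow_succ', hζ, pow_zero]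
  · rw [pow_succ']

theorem shiftMatrix_mul_clockMatrix [NeZero n] {ζ : R} (hζ : ζ ^ n = 1) :
    shiftMatrix n R * clockMatrix n ζ = ζ • (clockMatrix n ζ * shiftMatrix n R) := by
  ext a b
  rw [Matrix.smul_apply, clockMatrix, mul_diagonal, diagonal_mul, shiftMatrix,
    Equiv.Perm.permMatrix, PEquiv.toMatrix_apply, Equiv.toPEquiv_apply]
  split_ifs with h
  · rw [← Option.mem_some_iff.mp h, pow_val_finRotate hζ, smul_eq_mul]
    ring
  · simp

theorem shiftMatrix_mem_unitaryGroup [StarRing R] : shiftMatrix n R ∈ unitaryGroup (Fin n) R :=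
  permMatrix_mem_unitaryGroup _

theorem clockMatrix_mem_unitaryGroup [StarRing R] {ζ : R} (hζ : ζ ∈ unitary R) :
    clockMatrix n ζ ∈ unitaryGroup (Fin n) R := by
  rw [mem_unitaryGroup_iff', star_eq_conjTranspose, clockMatrix, diagonal_conjTranspose,
    diagonal_mul_diagonal, ← diagonal_one]
  congr 1
  funext k
  rw [Pi.star_apply, star_pow, ← mul_pow, Unitary.star_mul_self_of_mem hζ, one_pow]

end ClockShift

theorem mem_SUgrp_iff {n : ℕ} {U : unitaryGroup (Fin n) ℂ} :
    U ∈ SUgrp n ↔ (U : Matrix (Fin n) (Fin n) ℂ).det = 1 := by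
  simp [SUgrp, MonoidHom.mem_ker]

namespace SU

variable {n : ℕ}

theorem mat_injective : Function.Injective (SU.mat (p := n)) :=
  fun _ _ h => Subtype.ext (Subtype.ext h)

@[simp] theorem mat_mul (x y : SU n) : (x * y).mat = x.mat * y.mat := rfl

theorem det_mat (x : SU n) : x.mat.det = 1 :=
  mem_SUgrp_iff.mp x.2

theorem exists_mat_eq_smul [NeZero n] {U : Matrix (Fin n) (Fin n) ℂ}
    (hU : U ∈ unitaryGroup (Fin n) ℂ) : ∃ (x : SU n) (ε : ℂ), ε ≠ 0 ∧ x.mat = ε • U := by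
  have hdet : ‖U.det‖ = 1 := CStarRing.norm_of_mem_unitary (det_of_mem_unitary hU)
  obtain ⟨ε, hε⟩ := IsAlgClosed.exists_pow_nat_eq (star U.det) (Nat.pos_of_neZero n)
  have hεn : ‖ε‖ = 1 := by
    rw [← pow_left_inj₀ (norm_nonneg ε) zero_le_one (NeZero.ne n), ← norm_pow, hε, norm_star,
      hdet, one_pow]
  have hεU : ε • U ∈ unitaryGroup (Fin n) ℂ :=
    Unitary.smul_mem_of_mem (Complex.mem_unitary_of_norm_eq_one hεn) hU
  refine ⟨⟨⟨ε • U, hεU⟩, mem_SUgrp_iff.mpr ?_⟩, ε, ?_, rfl⟩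
  · rw [det_smul, Fintype.card_fin, hε, Unitary.star_mul_self_of_mem (det_of_mem_unitary hU)]
  · rintro rfl
    simp at hεn

theorem commute_mat_of_mem_center [NeZero n] {c : SU n} (hc : c ∈ center (SU n))
    {U : Matrix (Fin n) (Fin n) ℂ} (hU : U ∈ unitaryGroup (Fin n) ℂ) : Commute U c.mat := by
  obtain ⟨x, ε, hε, hx⟩ := exists_mat_eq_smul hU
  have hxc : Commute (ε • U) c.mat := hx ▸ congrArg SU.mat (mem_center_iff.mp hc x)
  simpa [inv_smul_smul₀ hε] using hxc.smul_left ε⁻¹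

theorem exists_mat_eq_smul_one_of_mem_center [NeZero n] {c : SU n} (hc : c ∈ center (SU n)) :
    ∃ ζ : ℂ, ζ ^ n = 1 ∧ c.mat = ζ • 1 := by
  obtain ⟨ζ, hζ⟩ := exists_scalar_eq_of_forall_commute_unitary fun U hU =>
    commute_mat_of_mem_center hc hU
  have hcζ : c.mat = ζ • 1 := by rw [← hζ, smul_one_eq_diagonal]; rfl
  refine ⟨ζ, ?_, hcζ⟩
  rw [← det_mat c, hcζ, det_smul, det_one, mul_one, Fintype.card_fin]

theorem exists_commutator_eq_of_mem_center {c : SU n} (hc : c ∈ center (SU n)) :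
    ∃ x y : SU n, ⁅x, y⁆ = c := by
  rcases eq_zero_or_neZero n with rfl | _
  · exact ⟨1, 1, mat_injective (Subsingleton.elim _ _)⟩
  obtain ⟨ζ, hζn, hcζ⟩ := exists_mat_eq_smul_one_of_mem_center hc
  have hζ : ζ ∈ unitary ℂ :=
    Complex.mem_unitary_of_norm_eq_one (Complex.norm_eq_one_of_pow_eq_one hζn (NeZero.ne n))
  obtain ⟨x, δ, -, hx⟩ := exists_mat_eq_smul (shiftMatrix_mem_unitaryGroup (n := n))
  obtain ⟨y, ε, -, hy⟩ := exists_mat_eq_smul (clockMatrix_mem_unitaryGroup (n := n) hζ)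
  refine ⟨x, y, commutatorElement_eq_of_mul_eq (mat_injective ?_)⟩
  simp only [mat_mul, hx, hy, hcζ, smul_mul_smul_comm, shiftMatrix_mul_clockMatrix hζn, one_mul,
    smul_smul]
  congr 1
  ring

end SU

theorem exists_commutator_eq_central_general (p : ℕ)
    (c : SU p) (hc : c ∈ Subgroup.center (SU p)) :
    ∃ x y : SU p, ⁅x, y⁆ = c :=
  SU.exists_commutator_eq_of_mem_center hc

/-- For a prime `p` and a nontrivial central element `c` of `SU(p)`, there exist
`x, y ∈ SU(p)` with `⁅x,y⁆ = c`. -/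
theorem exists_commutator_eq_central (p : ℕ) (hp : p.Prime)
    (c : SU p) (hc : c ∈ Subgroup.center (SU p)) (hc1 : c ≠ 1) :
    ∃ x y : SU p, ⁅x, y⁆ = c :=
  exists_commutator_eq_central_general p c hc
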